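/- Fix d ≥ 1. Define the step function Λ₀ : ℝ^d → ℝ̄ by Λ₀(x) = 0 if x = 0; Λ₀(x) = l if x ∈ B^sp_(l) \ B^sp_(l−1) for l ∈ {1,…,d} (with B^sp_(0) = {0}); and Λ₀(x) = +∞ if ‖x‖ > 1 (i.e. x ∉ B^sp_(d), the Euclidean unit ball). Define L₀ : ℝ^d → ℝ̄ by L₀(x) = sup_{y ∈ ℝ^d} ( ⟨x,y⟩ − max_{l ∈ {0,1,…,d}} ( ‖y‖_(l) − l ) ). Then L₀ is the Fenchel biconjugate of Λ₀, i.e. L₀ is the largest proper convex lower semicontinuous function below Λ₀. -/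

import Mathlib

noncomputable section

variable {d : ℕ}

/-- The projection `x_K` of `x` onto the coordinates in `K`
(the components outside `K` vanish). -/
def restr (K : Finset (Fin d)) (x : EuclideanSpace ℝ (Fin d)) : EuclideanSpace ℝ (Fin d) :=
  WithLp.toLp 2 (fun i => if i ∈ K then x i else 0)

/-- The 2-k-symmetric gauge norm `‖y‖_(k) = sup {‖y_K‖ : |K| ≤ k}`
(equal to `0` for `k = 0`, by the convention `‖·‖_(0) = 0`). -/
def gaugeNorm (k : ℕ) (y : EuclideanSpace ℝ (Fin d)) : ℝ :=
  ⨆ K : {K : Finset (Fin d) // K.card ≤ k}, ‖restr (K : Finset (Fin d)) y‖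

/-- The ℓ₀ pseudonorm: the number of nonzero components. -/
def l0 (x : EuclideanSpace ℝ (Fin d)) : ℕ :=
  (Finset.univ.filter fun i => x i ≠ 0).card

open Classical in
/-- The Capra coupling `¢(x,y) = ⟨x,y⟩ / ‖x‖` for `x ≠ 0`, and `¢(0,y) = 0`. -/
def capra (x y : EuclideanSpace ℝ (Fin d)) : ℝ :=
  if x = 0 then 0 else (inner ℝ x y : ℝ) / ‖x‖

/-- The Capra conjugate of ℓ₀: `y ↦ max_{0 ≤ l ≤ d} (‖y‖_(l) − l)`. -/
def capraConjL0 (y : EuclideanSpace ℝ (Fin d)) : ℝ :=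
  ⨆ l : Fin (d + 1), (gaugeNorm (l : ℕ) y - ((l : ℕ) : ℝ))

/-- `L₀(x) = sup_y (⟨x,y⟩ − max_{0 ≤ l ≤ d}(‖y‖_(l) − l))`, with values in `ℝ̄ = EReal`. -/
def L0 (x : EuclideanSpace ℝ (Fin d)) : EReal :=
  ⨆ y : EuclideanSpace ℝ (Fin d), (((inner ℝ x y : ℝ) - capraConjL0 y : ℝ) : EReal)

/-- The k-support norm: the dual norm of the 2-k-symmetric gauge norm,
`‖y‖^sp_(k) = sup {⟨x,y⟩ : ‖x‖_(k) ≤ 1}`. -/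
def suppNorm (k : ℕ) (y : EuclideanSpace ℝ (Fin d)) : ℝ :=
  sSup {c : ℝ | ∃ x : EuclideanSpace ℝ (Fin d), gaugeNorm k x ≤ 1 ∧ c = (inner ℝ x y : ℝ)}

/-- The unit ball of the k-support norm, with the convention `B^sp_(0) = {0}`. -/
def Bsp (d k : ℕ) : Set (EuclideanSpace ℝ (Fin d)) :=
  if k = 0 then {0} else {y | suppNorm k y ≤ 1}

/-- The degenerate unit sphere `S_K = {x : x_{−K} = 0 and ‖x_K‖ = 1}`. -/
def sphK (K : Finset (Fin d)) : Set (EuclideanSpace ℝ (Fin d)) :=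
  {x | (∀ i, i ∉ K → x i = 0) ∧ ‖restr K x‖ = 1}

/-- The degenerate unit ball `B_K = {x : x_{−K} = 0 and ‖x_K‖ ≤ 1}`. -/
def ballK (K : Finset (Fin d)) : Set (EuclideanSpace ℝ (Fin d)) :=
  {x | (∀ i, i ∉ K → x i = 0) ∧ ‖restr K x‖ ≤ 1}

/-!
The Fenchel conjugate of the step function is `y ↦ max_l (‖y‖_(l) − l)`, whose conjugate is `L₀`
by definition. Two facts about the support-norm balls give this: `⟨z, y⟩ ≤ ‖y‖_(l)` for
`z ∈ B^sp_(l)` (duality of the two norms), with equality at the normalised projection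
`y_K / ‖y_K‖` onto a maximising `K`, which lies in `B^sp_(l)`. As `Λ₀ z` is the least `m` with
`z ∈ B^sp_(m)`, each `z` contributes at most `‖y‖_(m) − m` to the conjugate, and the equality
point of level `l` contributes at least `‖y‖_(l) − l`.
-/

@[simp]
lemma restr_apply (K : Finset (Fin d)) (x : EuclideanSpace ℝ (Fin d)) (i : Fin d) :
    restr K x i = if i ∈ K then x i else 0 :=
  rfl

lemma restr_eq_self_iff {K : Finset (Fin d)} {x : EuclideanSpace ℝ (Fin d)} :
    restr K x = x ↔ ∀ i, i ∉ K → x i = 0 := by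
  refine ⟨fun h i hi => by rw [← h, restr_apply, if_neg hi], fun h => ?_⟩
  ext i
  by_cases hi : i ∈ K <;> simp [hi, h]

lemma restr_smul (K : Finset (Fin d)) (c : ℝ) (x : EuclideanSpace ℝ (Fin d)) :
    restr K (c • x) = c • restr K x := by
  ext i
  by_cases hi : i ∈ K <;> simp [hi]

lemma inner_restr_right (K : Finset (Fin d)) (x y : EuclideanSpace ℝ (Fin d)) :
    inner ℝ x (restr K y) = inner ℝ (restr K x) (restr K y) := by
  simp only [PiLp.inner_apply, RCLike.inner_apply, conj_trivial, restr_apply]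
  refine Finset.sum_congr rfl fun i _ => ?_
  by_cases hi : i ∈ K <;> simp [hi]

lemma norm_restr_singleton (i : Fin d) (x : EuclideanSpace ℝ (Fin d)) :
    ‖restr {i} x‖ = |x i| := by
  have hsum : ∑ j, ‖restr {i} x j‖ ^ 2 = |x i| ^ 2 := by
    rw [Finset.sum_eq_single i (fun j _ hj => by simp [hj]) (by simp)]
    simp [sq_abs]
  rw [EuclideanSpace.norm_eq, hsum, Real.sqrt_sq (abs_nonneg _)]

instance (k : ℕ) : Nonempty {K : Finset (Fin d) // K.card ≤ k} := ⟨⟨∅, by simp⟩⟩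

lemma le_gaugeNorm {k : ℕ} {K : Finset (Fin d)} (hK : K.card ≤ k)
    (y : EuclideanSpace ℝ (Fin d)) : ‖restr K y‖ ≤ gaugeNorm k y :=
  le_ciSup (f := fun K : {K : Finset (Fin d) // K.card ≤ k} => ‖restr (K : Finset (Fin d)) y‖)
    (Finite.bddAbove_range _) ⟨K, hK⟩

lemma exists_norm_restr_eq_gaugeNorm (k : ℕ) (y : EuclideanSpace ℝ (Fin d)) :
    ∃ K : Finset (Fin d), K.card ≤ k ∧ ‖restr K y‖ = gaugeNorm k y := by
  obtain ⟨K, hK⟩ := exists_eq_ciSup_of_finite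
    (f := fun K : {K : Finset (Fin d) // K.card ≤ k} => ‖restr (K : Finset (Fin d)) y‖)
  exact ⟨K, K.2, hK⟩

lemma gaugeNorm_nonneg (k : ℕ) (y : EuclideanSpace ℝ (Fin d)) : 0 ≤ gaugeNorm k y :=
  (norm_nonneg _).trans (le_gaugeNorm (K := ∅) (Nat.zero_le k) y)

lemma gaugeNorm_smul (k : ℕ) (c : ℝ) (y : EuclideanSpace ℝ (Fin d)) :
    gaugeNorm k (c • y) = |c| * gaugeNorm k y := by
  simp only [gaugeNorm, Real.mul_iSup_of_nonneg (abs_nonneg c), restr_smul, norm_smul,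
    Real.norm_eq_abs]

lemma abs_apply_le_gaugeNorm {k : ℕ} (hk : 1 ≤ k) (y : EuclideanSpace ℝ (Fin d)) (i : Fin d) :
    |y i| ≤ gaugeNorm k y :=
  norm_restr_singleton i y ▸ le_gaugeNorm (by simpa using hk) y

lemma eq_zero_of_gaugeNorm_eq_zero {k : ℕ} (hk : 1 ≤ k) {y : EuclideanSpace ℝ (Fin d)}
    (hy : gaugeNorm k y = 0) : y = 0 := by
  ext i
  exact abs_nonpos_iff.mp (hy ▸ abs_apply_le_gaugeNorm hk y i)

section SupportNorm

variable {k : ℕ}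

lemma bddAbove_inner_of_gaugeNorm_le_one (hk : 1 ≤ k) (y : EuclideanSpace ℝ (Fin d)) :
    BddAbove {c : ℝ | ∃ x : EuclideanSpace ℝ (Fin d), gaugeNorm k x ≤ 1 ∧ c = inner ℝ x y} := by
  refine ⟨∑ i, |y i|, ?_⟩
  rintro _ ⟨x, hx, rfl⟩
  simp only [PiLp.inner_apply, RCLike.inner_apply, conj_trivial]
  refine Finset.sum_le_sum fun i _ => (le_abs_self _).trans ?_
  rw [abs_mul]
  exact mul_le_of_le_one_right (abs_nonneg _) ((abs_apply_le_gaugeNorm hk x i).trans hx)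

lemma real_inner_le_suppNorm (hk : 1 ≤ k) {x : EuclideanSpace ℝ (Fin d)} (hx : gaugeNorm k x ≤ 1)
    (y : EuclideanSpace ℝ (Fin d)) : inner ℝ x y ≤ suppNorm k y :=
  le_csSup (bddAbove_inner_of_gaugeNorm_le_one hk y) ⟨x, hx, rfl⟩

lemma suppNorm_le {y : EuclideanSpace ℝ (Fin d)} {a : ℝ} (ha : 0 ≤ a)
    (h : ∀ x : EuclideanSpace ℝ (Fin d), gaugeNorm k x ≤ 1 → inner ℝ x y ≤ a) :
    suppNorm k y ≤ a :=
  Real.sSup_le (by rintro _ ⟨x, hx, rfl⟩; exact h x hx) ha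

lemma real_inner_le_suppNorm_mul_gaugeNorm (hk : 1 ≤ k) (z y : EuclideanSpace ℝ (Fin d)) :
    inner ℝ z y ≤ suppNorm k z * gaugeNorm k y := by
  rcases (gaugeNorm_nonneg k y).eq_or_lt with hy | hy
  · rw [← hy, mul_zero, eq_zero_of_gaugeNorm_eq_zero hk hy.symm, inner_zero_right]
  have hx : gaugeNorm k ((gaugeNorm k y)⁻¹ • y) ≤ 1 := by
    rw [gaugeNorm_smul, abs_of_pos (inv_pos.mpr hy), inv_mul_cancel₀ hy.ne']
  have h := real_inner_le_suppNorm hk hx z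
  rw [real_inner_smul_left, real_inner_comm, inv_mul_le_iff₀ hy] at h
  linarith

end SupportNorm

lemma real_inner_le_gaugeNorm_of_mem_Bsp {l : ℕ} {z : EuclideanSpace ℝ (Fin d)}
    (hz : z ∈ Bsp d l) (y : EuclideanSpace ℝ (Fin d)) : inner ℝ z y ≤ gaugeNorm l y := by
  unfold Bsp at hz
  split_ifs at hz with hl
  · rw [Set.mem_singleton_iff.mp hz, inner_zero_left]
    exact gaugeNorm_nonneg l y
  · calc inner ℝ z y ≤ suppNorm l z * gaugeNorm l y :=
          real_inner_le_suppNorm_mul_gaugeNorm (Nat.one_le_iff_ne_zero.mpr hl) z y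
      _ ≤ gaugeNorm l y := mul_le_of_le_one_left (gaugeNorm_nonneg l y) hz

lemma ballK_subset_Bsp {l : ℕ} {K : Finset (Fin d)} (hK : K.card ≤ l) : ballK K ⊆ Bsp d l := by
  rintro z ⟨hzK, hz⟩
  rw [← restr_eq_self_iff] at hzK
  unfold Bsp
  split_ifs with hl
  · rw [hl, Nat.le_zero, Finset.card_eq_zero] at hK
    subst hK
    rw [Set.mem_singleton_iff, ← hzK]
    ext i
    simp
  refine suppNorm_le zero_le_one fun x hx => ?_
  calc inner ℝ x z = inner ℝ (restr K x) (restr K z) := by rw [← inner_restr_right, hzK]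
    _ ≤ ‖restr K x‖ * ‖restr K z‖ := real_inner_le_norm _ _
    _ ≤ 1 := mul_le_one₀ ((le_gaugeNorm hK x).trans hx) (norm_nonneg _) hz

lemma mem_Bsp_self_of_norm_le_one {z : EuclideanSpace ℝ (Fin d)} (hz : ‖z‖ ≤ 1) :
    z ∈ Bsp d d := by
  have hz_univ : restr Finset.univ z = z := restr_eq_self_iff.mpr (by simp)
  exact ballK_subset_Bsp (K := Finset.univ) (by simp)
    ⟨restr_eq_self_iff.mp hz_univ, by rwa [hz_univ]⟩

lemma exists_mem_Bsp_real_inner_eq_gaugeNorm (l : ℕ) (y : EuclideanSpace ℝ (Fin d)) :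
    ∃ z ∈ Bsp d l, inner ℝ z y = gaugeNorm l y := by
  obtain ⟨K, hK, hKy⟩ := exists_norm_restr_eq_gaugeNorm l y
  set r := ‖restr K y‖
  -- for `r = 0` the witness is `0`, thanks to `0⁻¹ = 0`
  have hsupp : restr K (r⁻¹ • restr K y) = r⁻¹ • restr K y := by
    rw [restr_eq_self_iff]
    intro i hi
    simp [hi]
  refine ⟨r⁻¹ • restr K y, ballK_subset_Bsp hK ⟨restr_eq_self_iff.mp hsupp, ?_⟩, ?_⟩
  · rw [hsupp, norm_smul, norm_inv, norm_norm]
    exact inv_mul_le_one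
  · rw [real_inner_smul_left, real_inner_comm, inner_restr_right, real_inner_self_eq_norm_sq,
      ← hKy, sq, ← mul_assoc, inv_mul_mul_self]

lemma le_capraConjL0 {l : ℕ} (hl : l ≤ d) (y : EuclideanSpace ℝ (Fin d)) :
    gaugeNorm l y - l ≤ capraConjL0 y :=
  le_ciSup (f := fun l : Fin (d + 1) => gaugeNorm (l : ℕ) y - ((l : ℕ) : ℝ))
    (Finite.bddAbove_range _) ⟨l, Nat.lt_succ_of_le hl⟩

lemma exists_capraConjL0_eq (y : EuclideanSpace ℝ (Fin d)) :
    ∃ l ≤ d, gaugeNorm l y - l = capraConjL0 y := by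
  obtain ⟨l, hl⟩ := exists_eq_ciSup_of_finite
    (f := fun l : Fin (d + 1) => gaugeNorm (l : ℕ) y - ((l : ℕ) : ℝ))
  exact ⟨l, Nat.le_of_lt_succ l.2, hl⟩

lemma coe_add_neg_natCast (a : ℝ) (m : ℕ) :
    (a : EReal) + -(m : EReal) = ((a - m : ℝ) : EReal) := by
  rw [← EReal.coe_coe_eq_natCast, EReal.coe_sub]
  rfl

def fenchelConj {E : Type*} [NormedAddCommGroup E] [InnerProductSpace ℝ E] (f : E → EReal)
    (y : E) : EReal :=
  ⨆ z, ((inner ℝ z y : ℝ) : EReal) + -f z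

section StepFunction

variable {Λ : EuclideanSpace ℝ (Fin d) → EReal}

open Classical in
lemma exists_mem_Bsp_step_eq (hΛ0 : Λ 0 = 0)
    (hΛstep : ∀ l : ℕ, 1 ≤ l → l ≤ d → ∀ x ∈ Bsp d l \ Bsp d (l - 1), Λ x = (l : EReal))
    {n : ℕ} (hn : n ≤ d) {z : EuclideanSpace ℝ (Fin d)} (hz : z ∈ Bsp d n) :
    ∃ m ≤ n, z ∈ Bsp d m ∧ Λ z = m := by
  have hlevel : ∃ m, z ∈ Bsp d m := ⟨n, hz⟩
  have hmin := Nat.find_min' hlevel hz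
  refine ⟨Nat.find hlevel, hmin, Nat.find_spec hlevel, ?_⟩
  rcases Nat.eq_zero_or_pos (Nat.find hlevel) with h0 | hpos
  · have hz0 := Nat.find_spec hlevel
    rw [h0, Bsp, if_pos rfl, Set.mem_singleton_iff] at hz0
    rw [h0, hz0, hΛ0, Nat.cast_zero]
  · exact hΛstep _ hpos (hmin.trans hn) z
      ⟨Nat.find_spec hlevel, Nat.find_min hlevel (Nat.sub_lt hpos one_pos)⟩

lemma fenchelConj_step_eq_capraConjL0 (hΛ0 : Λ 0 = 0)
    (hΛstep : ∀ l : ℕ, 1 ≤ l → l ≤ d → ∀ x ∈ Bsp d l \ Bsp d (l - 1), Λ x = (l : EReal))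
    (hΛtop : ∀ x : EuclideanSpace ℝ (Fin d), 1 < ‖x‖ → Λ x = ⊤) (y : EuclideanSpace ℝ (Fin d)) :
    fenchelConj Λ y = capraConjL0 y := by
  apply le_antisymm
  · refine iSup_le fun z => ?_
    rcases lt_or_ge 1 ‖z‖ with hz | hz
    · rw [hΛtop z hz, EReal.neg_top, EReal.add_bot]
      exact bot_le
    obtain ⟨m, hm, hzm, hΛz⟩ := exists_mem_Bsp_step_eq hΛ0 hΛstep le_rfl
      (mem_Bsp_self_of_norm_le_one hz)
    rw [hΛz, coe_add_neg_natCast, EReal.coe_le_coe_iff]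
    linarith [real_inner_le_gaugeNorm_of_mem_Bsp hzm y, le_capraConjL0 hm y]
  · obtain ⟨l, hl, hly⟩ := exists_capraConjL0_eq y
    obtain ⟨z, hzl, hzy⟩ := exists_mem_Bsp_real_inner_eq_gaugeNorm l y
    obtain ⟨m, hml, -, hΛz⟩ := exists_mem_Bsp_step_eq hΛ0 hΛstep hl hzl
    refine le_trans ?_ (le_iSup _ z)
    rw [hΛz, coe_add_neg_natCast, EReal.coe_le_coe_iff, ← hly, hzy]
    linarith [(Nat.cast_le (α := ℝ)).mpr hml]

end StepFunction

theorem L0_eq_fenchel_biconjugate_of_step_general (d : ℕ)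
    (Λ : EuclideanSpace ℝ (Fin d) → EReal)
    (hΛ0 : Λ 0 = 0)
    (hΛstep : ∀ l : ℕ, 1 ≤ l → l ≤ d →
        ∀ x ∈ Bsp d l \ Bsp d (l - 1), Λ x = (l : EReal))
    (hΛtop : ∀ x : EuclideanSpace ℝ (Fin d), 1 < ‖x‖ → Λ x = ⊤) :
    ∀ x : EuclideanSpace ℝ (Fin d),
      L0 x = ⨆ y : EuclideanSpace ℝ (Fin d),
        (((inner ℝ x y : ℝ) : EReal) +
          (- ⨆ z : EuclideanSpace ℝ (Fin d), (((inner ℝ z y : ℝ) : EReal) + (- Λ z)))) := by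
  intro x
  refine iSup_congr fun y => ?_
  change _ = _ + -fenchelConj Λ y
  rw [fenchelConj_step_eq_capraConjL0 hΛ0 hΛstep hΛtop y, sub_eq_add_neg, EReal.coe_add,
    EReal.coe_neg]

/-- `L₀` is the Fenchel biconjugate of the step function `Λ₀`,
where `Λ₀(0) = 0`, `Λ₀(x) = l` for `x ∈ B^sp_(l) \ B^sp_(l−1)` (`1 ≤ l ≤ d`, with
`B^sp_(0) = {0}`), and `Λ₀(x) = +∞` for `‖x‖ > 1` (i.e. outside `B^sp_(d)`, the
Euclidean unit ball). -/
theorem L0_eq_fenchel_biconjugate_of_step (d : ℕ) (hd : 1 ≤ d)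
    (Λ : EuclideanSpace ℝ (Fin d) → EReal)
    (hΛ0 : Λ 0 = 0)
    (hΛstep : ∀ l : ℕ, 1 ≤ l → l ≤ d →
        ∀ x ∈ Bsp d l \ Bsp d (l - 1), Λ x = (l : EReal))
    (hΛtop : ∀ x : EuclideanSpace ℝ (Fin d), 1 < ‖x‖ → Λ x = ⊤) :
    ∀ x : EuclideanSpace ℝ (Fin d),
      L0 x = ⨆ y : EuclideanSpace ℝ (Fin d),
        (((inner ℝ x y : ℝ) : EReal) +
          (- ⨆ z : EuclideanSpace ℝ (Fin d), (((inner ℝ z y : ℝ) : EReal) + (- Λ z)))) :=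
  L0_eq_fenchel_biconjugate_of_step_general d Λ hΛ0 hΛstep hΛtop
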